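/- arXiv:1401.0295 — 3 statements merged into one kernel-verified Lean document; each statement's English description precedes it below -/
import Mathlib

section
/- Let d ∈ ℕ and define the taming map ψ : ℝ^d → ℝ^d by ψ(v) = v/(1 + ‖v‖²). Then for every v ∈ ℝ^d it holds that ‖ψ'(v) − Id_{ℝ^d}‖_{L(ℝ^d)} ≤ 3·(min{1, ‖v‖})². -/
/-!
By the product rule, `ψ'(v) w = w / (1 + ‖v‖²) - 2 ⟪v, w⟫ v / (1 + ‖v‖²)²`, so `ψ'(v) - Id` is
`-‖v‖² / (1 + ‖v‖²)` times the identity plus a rank-one map of norm `2 ‖v‖² / (1 + ‖v‖²)²`.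
With `r = ‖v‖`, these two coefficients are bounded by `r²` and `2 r²`, and also by `1` and `2`.
-/

/-- The taming map `ψ(v) = v / (1 + ‖v‖²)` on `ℝ^d`. -/
noncomputable def tamingMap (d : ℕ) (v : EuclideanSpace ℝ (Fin d)) : EuclideanSpace ℝ (Fin d) :=
  (1 + ‖v‖ ^ 2)⁻¹ • v

section InnerProductSpace

variable {E : Type*} [NormedAddCommGroup E] [InnerProductSpace ℝ E]

theorem hasFDerivAt_inv_one_add_norm_sq (v : E) :
    HasFDerivAt (fun w : E => (1 + ‖w‖ ^ 2)⁻¹) ((-2 / (1 + ‖v‖ ^ 2) ^ 2) • innerSL ℝ v) v := by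
  have h : HasFDerivAt (fun w : E => 1 + ‖w‖ ^ 2) (2 • innerSL ℝ v) v :=
    (hasStrictFDerivAt_norm_sq v).hasFDerivAt.const_add 1
  refine ((hasDerivAt_inv (by positivity)).comp_hasFDerivAt v h).congr_fderiv ?_
  ext w
  simp only [neg_smul, neg_apply, smul_apply, coe_innerSL_apply, nsmul_eq_mul, Nat.cast_ofNat,
    smul_eq_mul]
  ring

theorem hasFDerivAt_inv_one_add_norm_sq_smul (v : E) :
    HasFDerivAt (fun w : E => (1 + ‖w‖ ^ 2)⁻¹ • w)
      ((1 + ‖v‖ ^ 2)⁻¹ • ContinuousLinearMap.id ℝ E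
        + ((-2 / (1 + ‖v‖ ^ 2) ^ 2) • innerSL ℝ v).smulRight v) v :=
  (hasFDerivAt_inv_one_add_norm_sq v).smul (hasFDerivAt_id v)

theorem norm_fderiv_inv_one_add_norm_sq_smul_sub_id_le (v : E) :
    ‖fderiv ℝ (fun w : E => (1 + ‖w‖ ^ 2)⁻¹ • w) v - ContinuousLinearMap.id ℝ E‖
      ≤ ‖v‖ ^ 2 / (1 + ‖v‖ ^ 2) + 2 * ‖v‖ ^ 2 / (1 + ‖v‖ ^ 2) ^ 2 := by
  rw [(hasFDerivAt_inv_one_add_norm_sq_smul v).fderiv]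
  set s := 1 + ‖v‖ ^ 2 with hs
  have hs1 : 1 ≤ s := by simp [hs]
  have hsplit : s⁻¹ • ContinuousLinearMap.id ℝ E + ((-2 / s ^ 2) • innerSL ℝ v).smulRight v
      - ContinuousLinearMap.id ℝ E
      = (s⁻¹ - 1) • ContinuousLinearMap.id ℝ E + ((-2 / s ^ 2) • innerSL ℝ v).smulRight v := by
    rw [sub_smul, one_smul]; abel
  have hid : ‖(s⁻¹ - 1) • ContinuousLinearMap.id ℝ E‖ ≤ 1 - s⁻¹ := by
    have hs' : s⁻¹ ≤ 1 := inv_le_one_of_one_le₀ hs1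
    calc ‖(s⁻¹ - 1) • ContinuousLinearMap.id ℝ E‖ ≤ ‖s⁻¹ - 1‖ :=
          (norm_smul _ _).trans_le
            (mul_le_of_le_one_right (norm_nonneg _) ContinuousLinearMap.norm_id_le)
      _ = 1 - s⁻¹ := by rw [Real.norm_eq_abs, abs_of_nonpos (by linarith), neg_sub]
  have hrank : ‖((-2 / s ^ 2) • innerSL ℝ v).smulRight v‖ = 2 / s ^ 2 * ‖v‖ * ‖v‖ := by
    rw [ContinuousLinearMap.norm_smulRight_apply, norm_smul, innerSL_apply_norm, Real.norm_eq_abs,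
      neg_div, abs_neg, abs_of_pos (by positivity)]
  rw [hsplit]
  calc _ ≤ (1 - s⁻¹) + 2 / s ^ 2 * ‖v‖ * ‖v‖ := (norm_add_le _ _).trans (by rw [hrank]; gcongr)
    _ = _ := by rw [hs]; field_simp; ring

end InnerProductSpace

theorem div_one_add_sq_add_two_mul_div_one_add_sq_sq_le (r : ℝ) :
    r ^ 2 / (1 + r ^ 2) + 2 * r ^ 2 / (1 + r ^ 2) ^ 2 ≤ 3 * min 1 r ^ 2 := by
  have hr2 : 0 ≤ r ^ 2 := by positivity
  rcases le_total r 1 with hr1 | hr1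
  · rw [min_eq_right hr1]
    have h1 : r ^ 2 / (1 + r ^ 2) ≤ r ^ 2 := div_le_self hr2 (by linarith)
    have h2 : 2 * r ^ 2 / (1 + r ^ 2) ^ 2 ≤ 2 * r ^ 2 := div_le_self (by positivity) (by nlinarith)
    linarith
  · rw [min_eq_left hr1]
    have h1 : r ^ 2 / (1 + r ^ 2) ≤ 1 := (div_le_one (by positivity)).2 (by linarith)
    have h2 : 2 * r ^ 2 / (1 + r ^ 2) ^ 2 ≤ 2 :=
      (div_le_iff₀ (by positivity)).2 (by nlinarith)
    linarith

/-- `‖ψ'(v) − Id‖ ≤ 3 (min{1, ‖v‖})²` for the taming map `ψ`. -/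
theorem tamingMap_fderiv_sub_id_norm_le (d : ℕ) (v : EuclideanSpace ℝ (Fin d)) :
    ‖fderiv ℝ (tamingMap d) v - ContinuousLinearMap.id ℝ (EuclideanSpace ℝ (Fin d))‖
      ≤ 3 * (min 1 ‖v‖) ^ 2 :=
  (norm_fderiv_inv_one_add_norm_sq_smul_sub_id_le v).trans
    (div_one_add_sq_add_two_mul_div_one_add_sq_sq_le ‖v‖)
end

section
/- Let α, δ ∈ (0,∞), β ∈ ℝ, q ∈ [3,∞) and define μ : ℝ² → ℝ² by μ(x₁,x₂) = ( x₂²(δ + 4αx₁) − (β²/2)x₁ , −x₁x₂(δ + 4αx₁) − (β²/2)x₂ ). Then for every ε ∈ (0,∞) there exists C ∈ [0,∞) such that for all x, y ∈ ℝ² it holds that ‖μ(x) − μ(y)‖ ≤ ( C + ε(‖x‖^q + ‖y‖^q) )·‖x − y‖. -/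
/-!
Writing `x⊥ = (x₁, -x₀)` for the quarter turn of `x`, the drift is
`μ x = ((δ + 4 α x₀) x₁) • x⊥ - (β² / 2) • x`: a scalar of quadratic growth times an isometry,
plus a linear term. Hence `‖μ x - μ y‖ ≤ K (1 + ‖x‖² + ‖y‖²) ‖x - y‖`, and since `q > 2` the
quadratic weight is dominated by `C + ε ‖·‖^q`.
-/

open Real

lemma exists_mul_sq_le_add_mul_rpow {K ε q : ℝ} (hK : 0 ≤ K) (hε : 0 < ε) (hq : 2 < q) :
    ∃ C, 0 ≤ C ∧ ∀ t, 0 ≤ t → K * t ^ 2 ≤ C + ε * t ^ q := by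
  set T := max 1 ((K / ε) ^ (q - 2)⁻¹)
  refine ⟨K * T ^ 2, by positivity, fun t ht => ?_⟩
  rcases le_total t T with htT | hTt
  · have : K * t ^ 2 ≤ K * T ^ 2 := by gcongr
    have : 0 ≤ ε * t ^ q := by positivity
    linarith
  · have ht1 : 0 < t := zero_lt_one.trans_le ((le_max_left _ _).trans hTt)
    have hKt : K ≤ ε * t ^ (q - 2) := by
      rw [← div_le_iff₀' hε]
      calc K / ε = ((K / ε) ^ (q - 2)⁻¹) ^ (q - 2) :=
            (rpow_inv_rpow (by positivity) (by linarith)).symm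
        _ ≤ t ^ (q - 2) := rpow_le_rpow (by positivity) ((le_max_right _ _).trans hTt) (by linarith)
    calc K * t ^ 2 ≤ ε * t ^ (q - 2) * t ^ 2 := by gcongr
      _ = ε * t ^ q := by rw [mul_assoc, ← rpow_two, ← rpow_add ht1, sub_add_cancel]
      _ ≤ K * T ^ 2 + ε * t ^ q := le_add_of_nonneg_left (by positivity)

lemma norm_smul_sub_smul_le {𝕜 E : Type*} [NormedField 𝕜] [SeminormedAddCommGroup E]
    [NormedSpace 𝕜 E] (a b : 𝕜) (u v : E) :
    ‖a • u - b • v‖ ≤ ‖a‖ * ‖u - v‖ + ‖a - b‖ * ‖v‖ := by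
  calc ‖a • u - b • v‖ = ‖a • (u - v) + (a - b) • v‖ := by
        rw [smul_sub, sub_smul, sub_add_sub_cancel]
    _ ≤ ‖a‖ * ‖u - v‖ + ‖a - b‖ * ‖v‖ := (norm_add_le _ _).trans_eq (by rw [norm_smul, norm_smul])

local notation "ℝ²" => EuclideanSpace ℝ (Fin 2)

def perp (x : ℝ²) : ℝ² := !₂[x 1, -x 0]

lemma norm_perp (x : ℝ²) : ‖perp x‖ = ‖x‖ := by
  simp [EuclideanSpace.norm_eq, perp, Fin.sum_univ_two, add_comm]

lemma perp_sub (x y : ℝ²) : perp x - perp y = perp (x - y) := by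
  ext i; fin_cases i <;> simp [perp]; ring

def driftFactor (α δ : ℝ) (x : ℝ²) : ℝ := (δ + 4 * α * x 0) * x 1

noncomputable def drift (α δ β : ℝ) (x : ℝ²) : ℝ² := driftFactor α δ x • perp x - (β ^ 2 / 2) • x

lemma eq_drift_of_apply {α δ β : ℝ} {μ : ℝ² → ℝ²}
    (hμ : ∀ x : ℝ², μ x 0 = (x 1) ^ 2 * (δ + 4 * α * x 0) - (β ^ 2 / 2) * x 0 ∧
      μ x 1 = -(x 0) * x 1 * (δ + 4 * α * x 0) - (β ^ 2 / 2) * x 1) :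
    μ = drift α δ β := by
  funext x; ext i; fin_cases i <;> simp [drift, driftFactor, perp, hμ x] <;> ring

lemma norm_add_mul_apply_le {ι : Type*} [Fintype ι] (a b : ℝ) (x : EuclideanSpace ℝ ι) (i : ι) :
    ‖a + b * x i‖ ≤ |a| + |b| * ‖x‖ := by
  calc _ ≤ ‖a‖ + ‖b‖ * ‖x i‖ := (norm_add_le _ _).trans_eq (by rw [norm_mul])
    _ ≤ _ := by
      rw [Real.norm_eq_abs, Real.norm_eq_abs b]
      gcongr; exact PiLp.norm_apply_le x i

lemma norm_driftFactor_le (α δ : ℝ) (x : ℝ²) :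
    ‖driftFactor α δ x‖ ≤ (|δ| + |4 * α| * ‖x‖) * ‖x‖ := by
  rw [driftFactor, norm_mul]
  gcongr
  exacts [norm_add_mul_apply_le _ _ x 0, PiLp.norm_apply_le x 1]

lemma norm_driftFactor_sub_le (α δ : ℝ) (x y : ℝ²) :
    ‖driftFactor α δ x - driftFactor α δ y‖ ≤
      (|δ| + |4 * α| * ‖x‖ + |4 * α| * ‖y‖) * ‖x - y‖ := by
  have hdiff : (δ + 4 * α * x 0) - (δ + 4 * α * y 0) = (4 * α) * (x - y) 0 := by simp; ring
  calc _ ≤ ‖δ + 4 * α * x 0‖ * ‖(x - y) 1‖ + ‖(δ + 4 * α * x 0) - (δ + 4 * α * y 0)‖ * ‖y 1‖ :=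
        norm_smul_sub_smul_le _ _ (x 1) (y 1)
    _ ≤ (|δ| + |4 * α| * ‖x‖) * ‖x - y‖ + (|4 * α| * ‖x - y‖) * ‖y‖ := by
        rw [hdiff, norm_mul, Real.norm_eq_abs (4 * α)]
        gcongr
        exacts [norm_add_mul_apply_le _ _ x 0, PiLp.norm_apply_le _ 1, PiLp.norm_apply_le _ 0,
          PiLp.norm_apply_le y 1]
    _ = _ := by ring

lemma norm_drift_sub_le (α δ β : ℝ) (x y : ℝ²) :
    ‖drift α δ β x - drift α δ β y‖ ≤
      (|δ| + 6 * |α| + β ^ 2 / 2) * (1 + ‖x‖ ^ 2 + ‖y‖ ^ 2) * ‖x - y‖ := by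
  set s := driftFactor α δ with hs
  calc ‖drift α δ β x - drift α δ β y‖
      = ‖(s x • perp x - s y • perp y) - (β ^ 2 / 2) • (x - y)‖ := by
        rw [drift, drift, ← hs, smul_sub]; abel_nf
    _ ≤ ‖s x‖ * ‖x - y‖ + ‖s x - s y‖ * ‖y‖ + β ^ 2 / 2 * ‖x - y‖ := by
        refine (norm_sub_le _ _).trans ?_
        rw [norm_smul, Real.norm_of_nonneg (by positivity)]
        gcongr
        simpa only [perp_sub, norm_perp] using norm_smul_sub_smul_le _ _ (perp x) (perp y)
    _ ≤ (|δ| + |4 * α| * ‖x‖) * ‖x‖ * ‖x - y‖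
          + (|δ| + |4 * α| * ‖x‖ + |4 * α| * ‖y‖) * ‖x - y‖ * ‖y‖ + β ^ 2 / 2 * ‖x - y‖ := by
        gcongr
        exacts [norm_driftFactor_le α δ x, norm_driftFactor_sub_le α δ x y]
    _ = ((|δ| + 4 * |α| * ‖x‖) * ‖x‖ + (|δ| + 4 * |α| * ‖x‖ + 4 * |α| * ‖y‖) * ‖y‖
          + β ^ 2 / 2) * ‖x - y‖ := by
        rw [abs_mul, abs_of_pos (four_pos : (0 : ℝ) < 4)]; ring
    _ ≤ _ := by
        gcongr
        nlinarith [abs_nonneg δ, abs_nonneg α, mul_nonneg (abs_nonneg δ) (sq_nonneg (‖x‖ - 1 / 2)),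
          mul_nonneg (abs_nonneg δ) (sq_nonneg (‖y‖ - 1 / 2)),
          mul_nonneg (abs_nonneg α) (sq_nonneg (‖x‖ - ‖y‖)),
          mul_nonneg (sq_nonneg β) (sq_nonneg ‖x‖), mul_nonneg (sq_nonneg β) (sq_nonneg ‖y‖)]

theorem experimentalPsychology_drift_local_lipschitz_general (α δ β q : ℝ)
    (hq : 3 ≤ q)
    (μ : EuclideanSpace ℝ (Fin 2) → EuclideanSpace ℝ (Fin 2))
    (hμ : ∀ x : EuclideanSpace ℝ (Fin 2),
      μ x 0 = (x 1) ^ 2 * (δ + 4 * α * x 0) - (β ^ 2 / 2) * x 0 ∧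
      μ x 1 = -(x 0) * x 1 * (δ + 4 * α * x 0) - (β ^ 2 / 2) * x 1) :
    ∀ ε : ℝ, 0 < ε → ∃ C : ℝ, 0 ≤ C ∧
      ∀ x y : EuclideanSpace ℝ (Fin 2),
        ‖μ x - μ y‖ ≤ (C + ε * (‖x‖ ^ q + ‖y‖ ^ q)) * ‖x - y‖ := by
  intro ε hε
  set K := |δ| + 6 * |α| + β ^ 2 / 2
  obtain ⟨C, hC, hK⟩ :=
    exists_mul_sq_le_add_mul_rpow (K := K) (by positivity) hε (by linarith : (2 : ℝ) < q)
  refine ⟨K + 2 * C, by positivity, fun x y => ?_⟩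
  rw [eq_drift_of_apply hμ]
  calc _ ≤ K * (1 + ‖x‖ ^ 2 + ‖y‖ ^ 2) * ‖x - y‖ := norm_drift_sub_le α δ β x y
    _ ≤ _ := by
        gcongr
        linarith [hK ‖x‖ (norm_nonneg x), hK ‖y‖ (norm_nonneg y)]

/-- The drift of the experimental-psychology model satisfies: for every `ε > 0` there
exists `C ≥ 0` with `‖μ(x) − μ(y)‖ ≤ (C + ε(‖x‖^q + ‖y‖^q))‖x − y‖` for all `x, y ∈ ℝ²`. -/
theorem experimentalPsychology_drift_local_lipschitz (α δ β q : ℝ)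
    (hα : 0 < α) (hδ : 0 < δ) (hq : 3 ≤ q)
    (μ : EuclideanSpace ℝ (Fin 2) → EuclideanSpace ℝ (Fin 2))
    (hμ : ∀ x : EuclideanSpace ℝ (Fin 2),
      μ x 0 = (x 1) ^ 2 * (δ + 4 * α * x 0) - (β ^ 2 / 2) * x 0 ∧
      μ x 1 = -(x 0) * x 1 * (δ + 4 * α * x 0) - (β ^ 2 / 2) * x 1) :
    ∀ ε : ℝ, 0 < ε → ∃ C : ℝ, 0 ≤ C ∧
      ∀ x y : EuclideanSpace ℝ (Fin 2),
        ‖μ x - μ y‖ ≤ (C + ε * (‖x‖ ^ q + ‖y‖ ^ q)) * ‖x - y‖ :=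
  experimentalPsychology_drift_local_lipschitz_general α δ β q hq μ hμ
end

section
/- Let c ∈ (0,∞), δ ∈ [3/4, ∞), let x : [0,1] → ℝ be continuous, set m = ∫₀¹ x(s) ds and y(s) = x(s) − m for s ∈ [0,1]. Then −c·∫₀¹ y(s)·x(s)³ ds ≤ c·( δ + 3(1 − 3/(4δ)) − 1 )·∫₀¹ y(s)⁴ ds − 3c·(1 − 3/(4δ))·( ∫₀¹ y(s)² ds )·( ∫₀¹ x(s)² ds ). -/
/-!
Write `x = y + m` with `∫ y = 0` and let `Iₖ = ∫ yᵏ`. Then `∫ y x³ = I₄ + 3m I₃ + 3m² I₂` and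
`∫ x² = I₂ + m²`, and with `α = 1 - 3/(4δ) ≥ 0` the difference of the two sides of the estimate is
`c ∫ δ y² (y + 3m/(2δ))² + 3cα (I₄ - I₂²)`. Both terms are nonnegative, the second by
Cauchy–Schwarz, because `[0,1]` has unit length.
-/

open MeasureTheory ProbabilityTheory

section

variable {α : Type*} [MeasurableSpace α] {μ : Measure α}

lemma MeasureTheory.MemLp.integrable_pow_of_le [IsFiniteMeasure μ] {f : α → ℝ} {p n : ℕ}
    (hf : MemLp f p μ) (hn : n ≤ p) : Integrable (fun s => f s ^ n) μ := by
  refine (integrable_norm_iff (hf.aestronglyMeasurable.pow n)).1 ?_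
  simpa only [Pi.pow_apply, norm_pow] using
    (hf.mono_exponent (by exact_mod_cast hn)).integrable_norm_pow'

lemma ContinuousOn.memLp_restrict_of_isCompact [TopologicalSpace α] [OpensMeasurableSpace α]
    [IsFiniteMeasureOnCompacts μ] {E : Type*} [NormedAddCommGroup E]
    [SecondCountableTopologyEither α E]
    {f : α → E} {s : Set α} (hs : IsCompact s) (hs' : MeasurableSet s) (hf : ContinuousOn f s)
    (p : ENNReal) : MemLp f p (μ.restrict s) := by
  obtain ⟨C, hC⟩ := hs.exists_bound_of_continuousOn hf
  have : IsFiniteMeasure (μ.restrict s) := isFiniteMeasure_restrict.2 hs.measure_lt_top.ne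
  exact MemLp.of_bound (hf.aestronglyMeasurable hs') C ((ae_restrict_iff' hs').2 (.of_forall hC))

lemma sq_integral_le_integral_sq [IsProbabilityMeasure μ] {f : α → ℝ} (hf : MemLp f 2 μ) :
    (∫ s, f s ∂μ) ^ 2 ≤ ∫ s, f s ^ 2 ∂μ := by
  have := variance_nonneg f μ
  rw [variance_eq_sub hf] at this
  simpa only [Pi.pow_apply, sub_nonneg] using this

variable {y : α → ℝ}

lemma integral_add_const_sq [IsProbabilityMeasure μ] (hy : MemLp y 2 μ) (hy0 : ∫ s, y s ∂μ = 0)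
    (m : ℝ) :
    ∫ s, (y s + m) ^ 2 ∂μ = ∫ s, y s ^ 2 ∂μ + m ^ 2 := by
  have h1 : Integrable y μ := hy.integrable (by norm_num)
  have h2 := hy.integrable_pow_of_le (n := 2) le_rfl
  calc ∫ s, (y s + m) ^ 2 ∂μ = ∫ s, (y s ^ 2 + 2 * m * y s + m ^ 2) ∂μ := by
        congr 1; ext s; ring
    _ = ∫ s, y s ^ 2 ∂μ + m ^ 2 := by
        rw [integral_add (by exact h2.add (h1.const_mul _)) (integrable_const _),
          integral_add h2 (h1.const_mul _), integral_const_mul, hy0]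
        simp

lemma integral_mul_add_const_pow_three [IsFiniteMeasure μ] (hy : MemLp y 4 μ)
    (hy0 : ∫ s, y s ∂μ = 0) (m : ℝ) :
    ∫ s, y s * (y s + m) ^ 3 ∂μ
      = ∫ s, y s ^ 4 ∂μ + 3 * m * ∫ s, y s ^ 3 ∂μ + 3 * m ^ 2 * ∫ s, y s ^ 2 ∂μ := by
  have h1 : Integrable y μ := hy.integrable (by norm_num)
  have h2 := hy.integrable_pow_of_le (n := 2) (by norm_num)
  have h3 := hy.integrable_pow_of_le (n := 3) (by norm_num)
  have h4 := hy.integrable_pow_of_le (n := 4) le_rfl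
  calc ∫ s, y s * (y s + m) ^ 3 ∂μ
        = ∫ s, (y s ^ 4 + 3 * m * y s ^ 3 + 3 * m ^ 2 * y s ^ 2 + m ^ 3 * y s) ∂μ := by
        congr 1; ext s; ring
    _ = _ := by
        rw [integral_add (by exact (h4.add (h3.const_mul _)).add (h2.const_mul _))
            (h1.const_mul _), integral_add (by exact h4.add (h3.const_mul _)) (h2.const_mul _),
          integral_add h4 (h3.const_mul _), integral_const_mul, integral_const_mul,
          integral_const_mul, hy0, mul_zero, add_zero]

lemma sq_integral_sq_le_integral_pow_four [IsProbabilityMeasure μ] (hy : MemLp y 4 μ) :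
    (∫ s, y s ^ 2 ∂μ) ^ 2 ≤ ∫ s, y s ^ 4 ∂μ := by
  have hsq : MemLp (fun s => y s ^ 2) 2 μ :=
    (memLp_two_iff_integrable_sq (hy.aestronglyMeasurable.pow 2)).2 <| by
      simpa only [Pi.pow_apply, ← pow_mul] using hy.integrable_pow_of_le (n := 4) le_rfl
  simpa only [← pow_mul] using sq_integral_le_integral_sq hsq

lemma quartic_form_integral_nonneg [IsFiniteMeasure μ] (hy : MemLp y 4 μ) (m : ℝ) {δ : ℝ}
    (hδ : 0 < δ) :
    0 ≤ δ * ∫ s, y s ^ 4 ∂μ + 3 * m * ∫ s, y s ^ 3 ∂μ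
      + 9 * m ^ 2 / (4 * δ) * ∫ s, y s ^ 2 ∂μ := by
  have h2 := hy.integrable_pow_of_le (n := 2) (by norm_num)
  have h3 := hy.integrable_pow_of_le (n := 3) (by norm_num)
  have h4 := hy.integrable_pow_of_le (n := 4) le_rfl
  calc 0 ≤ ∫ s, δ * (y s ^ 2 * (y s + 3 * m / (2 * δ)) ^ 2) ∂μ :=
        integral_nonneg fun s => by positivity
    _ = ∫ s, (δ * y s ^ 4 + 3 * m * y s ^ 3 + 9 * m ^ 2 / (4 * δ) * y s ^ 2) ∂μ := by
        congr 1; ext s; field_simp; ring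
    _ = _ := by
        rw [integral_add (by exact (h4.const_mul _).add (h3.const_mul _)) (h2.const_mul _),
          integral_add (h4.const_mul _) (h3.const_mul _), integral_const_mul,
          integral_const_mul, integral_const_mul]

end

lemma neg_mul_cubic_moment_le {c δ m I₂ I₃ I₄ : ℝ} (hc : 0 ≤ c) (hδ : 3 / 4 ≤ δ)
    (hquartic : 0 ≤ δ * I₄ + 3 * m * I₃ + 9 * m ^ 2 / (4 * δ) * I₂) (hI : I₂ ^ 2 ≤ I₄) :
    -c * (I₄ + 3 * m * I₃ + 3 * m ^ 2 * I₂)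
      ≤ c * (δ + 3 * (1 - 3 / (4 * δ)) - 1) * I₄
        - 3 * c * (1 - 3 / (4 * δ)) * I₂ * (I₂ + m ^ 2) := by
  have hα : 0 ≤ 1 - 3 / (4 * δ) := by
    rw [sub_nonneg, div_le_one (by positivity)]
    linarith
  have key : c * (δ + 3 * (1 - 3 / (4 * δ)) - 1) * I₄
        - 3 * c * (1 - 3 / (4 * δ)) * I₂ * (I₂ + m ^ 2)
        - -c * (I₄ + 3 * m * I₃ + 3 * m ^ 2 * I₂)
      = c * (δ * I₄ + 3 * m * I₃ + 9 * m ^ 2 / (4 * δ) * I₂)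
        + 3 * c * (1 - 3 / (4 * δ)) * (I₄ - I₂ ^ 2) := by
    field_simp
    ring
  have : 0 ≤ 3 * c * (1 - 3 / (4 * δ)) * (I₄ - I₂ ^ 2) := by
    have := sub_nonneg.2 hI
    positivity
  linarith [mul_nonneg hc hquartic]

theorem neg_integral_mul_add_const_pow_three_le {α : Type*} [MeasurableSpace α] {μ : Measure α}
    [IsProbabilityMeasure μ] {y : α → ℝ} (hy : MemLp y 4 μ) (hy0 : ∫ s, y s ∂μ = 0) (m : ℝ)
    {c δ : ℝ} (hc : 0 ≤ c) (hδ : 3 / 4 ≤ δ) :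
    -c * ∫ s, y s * (y s + m) ^ 3 ∂μ
      ≤ c * (δ + 3 * (1 - 3 / (4 * δ)) - 1) * (∫ s, y s ^ 4 ∂μ)
        - 3 * c * (1 - 3 / (4 * δ)) * (∫ s, y s ^ 2 ∂μ) * (∫ s, (y s + m) ^ 2 ∂μ) := by
  rw [integral_mul_add_const_pow_three hy hy0,
    integral_add_const_sq (hy.mono_exponent (by norm_num)) hy0]
  exact neg_mul_cubic_moment_le hc hδ (quartic_form_integral_nonneg hy m (by linarith))
    (sq_integral_sq_le_integral_pow_four hy)

/-- The key cubic-nonlinearity estimate for Cahn–Hilliard–Cook type equations: with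
`m = ∫₀¹ x` and `y = x − m`,
`−c∫₀¹ y x³ ≤ c(δ + 3(1 − 3/(4δ)) − 1)∫₀¹ y⁴ − 3c(1 − 3/(4δ))(∫₀¹ y²)(∫₀¹ x²)`. -/
theorem cahnHilliardCook_cubic_estimate (c δ : ℝ) (hc : 0 < c) (hδ : 3 / 4 ≤ δ)
    (x : ℝ → ℝ) (hx : ContinuousOn x (Set.Icc 0 1))
    (m : ℝ) (hm : m = ∫ s in (0 : ℝ)..1, x s)
    (y : ℝ → ℝ) (hy : ∀ s, y s = x s - m) :
    -c * ∫ s in (0 : ℝ)..1, y s * (x s) ^ 3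
      ≤ c * (δ + 3 * (1 - 3 / (4 * δ)) - 1) * (∫ s in (0 : ℝ)..1, (y s) ^ 4)
        - 3 * c * (1 - 3 / (4 * δ)) * (∫ s in (0 : ℝ)..1, (y s) ^ 2)
          * (∫ s in (0 : ℝ)..1, (x s) ^ 2) := by
  have : IsProbabilityMeasure (volume.restrict (Set.Icc (0 : ℝ) 1)) := ⟨by simp⟩
  have hx4 : MemLp x 4 (volume.restrict (Set.Icc (0 : ℝ) 1)) :=
    hx.memLp_restrict_of_isCompact isCompact_Icc measurableSet_Icc 4
  have hy4 : MemLp y 4 (volume.restrict (Set.Icc (0 : ℝ) 1)) := by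
    rw [funext hy]
    exact hx4.sub (memLp_const m)
  simp only [intervalIntegral.integral_of_le zero_le_one, ← integral_Icc_eq_integral_Ioc]
    at hm ⊢
  have hy0 : ∫ s in Set.Icc 0 1, y s = 0 := by
    simp only [hy]
    rw [integral_sub (hx4.integrable (by norm_num)) (integrable_const m), ← hm]
    simp
  have hxy : ∀ s, x s = y s + m := fun s => by rw [hy]; ring
  simp only [hxy]
  exact neg_integral_mul_add_const_pow_three_le hy4 hy0 m hc.le hδ
end
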